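/- Let v : ℝ² → ℝ be a smooth solution of the Tzitzéica equation v_{xx} + v_{yy} = 4(e^{−2v} − e^{v}). Define the Wirtinger derivatives ∂_z f = (1/2)(f_x − i f_y) and ∂_{z̄} f = (1/2)(f_x + i f_y) for smooth f : ℝ² → ℂ, and set V = e^{v} and u₃ = −(5/3)((∂_z v)² + ∂_z² v). Then ∂_{z̄} u₃ = 5 ∂_z V. -/

import Mathlib

open Complex Real

/-- Partial derivative in the first variable. -/
noncomputable def pdx (f : ℝ → ℝ → ℂ) (x y : ℝ) : ℂ := deriv (fun x' => f x' y) x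

/-- Partial derivative in the second variable. -/
noncomputable def pdy (f : ℝ → ℝ → ℂ) (x y : ℝ) : ℂ := deriv (fun y' => f x y') y

/-- Wirtinger derivative `∂_z f = (1/2)(f_x − i f_y)`. -/
noncomputable def dz (f : ℝ → ℝ → ℂ) (x y : ℝ) : ℂ :=
  (1/2) * (pdx f x y - Complex.I * pdy f x y)

/-- Wirtinger derivative `∂_z̄ f = (1/2)(f_x + i f_y)`. -/
noncomputable def dzb (f : ℝ → ℝ → ℂ) (x y : ℝ) : ℂ :=
  (1/2) * (pdx f x y + Complex.I * pdy f x y)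

section NVAux

variable {F : Type*} [NormedAddCommGroup F] [NormedSpace ℝ F]

/-- First directional partial derivative for functions on `ℝ × ℝ`. -/
noncomputable def PDX (f : ℝ×ℝ → F) (p : ℝ×ℝ) : F := fderiv ℝ f p (1,0)

/-- Second directional partial derivative for functions on `ℝ × ℝ`. -/
noncomputable def PDY (f : ℝ×ℝ → F) (p : ℝ×ℝ) : F := fderiv ℝ f p (0,1)

lemma hasDerivAt_PDX (f : ℝ×ℝ → F) (hf : ContDiff ℝ (⊤ : ℕ∞) f) (x y : ℝ) :
    HasDerivAt (fun x' => f (x', y)) (PDX f (x,y)) x := by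
  have h1 : HasDerivAt (fun x' : ℝ => ((x' : ℝ), y)) ((1:ℝ), (0:ℝ)) x :=
    (hasDerivAt_id x).prodMk (hasDerivAt_const x y)
  exact (hf.differentiable (by simp) (x,y)).hasFDerivAt.comp_hasDerivAt x h1

lemma hasDerivAt_PDY (f : ℝ×ℝ → F) (hf : ContDiff ℝ (⊤ : ℕ∞) f) (x y : ℝ) :
    HasDerivAt (fun y' => f (x, y')) (PDY f (x,y)) y := by
  have h1 : HasDerivAt (fun y' : ℝ => (x, (y' : ℝ))) ((0:ℝ), (1:ℝ)) y :=
    (hasDerivAt_const y x).prodMk (hasDerivAt_id y)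
  exact (hf.differentiable (by simp) (x,y)).hasFDerivAt.comp_hasDerivAt y h1

lemma contDiff_PDX (f : ℝ×ℝ → F) (hf : ContDiff ℝ (⊤ : ℕ∞) f) : ContDiff ℝ (⊤ : ℕ∞) (PDX f) := by
  have h := hf.fderiv_right (m := (⊤ : ℕ∞)) (by simp)
  exact (ContinuousLinearMap.apply ℝ F ((1:ℝ),(0:ℝ))).contDiff.comp h

lemma contDiff_PDY (f : ℝ×ℝ → F) (hf : ContDiff ℝ (⊤ : ℕ∞) f) : ContDiff ℝ (⊤ : ℕ∞) (PDY f) := by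
  have h := hf.fderiv_right (m := (⊤ : ℕ∞)) (by simp)
  exact (ContinuousLinearMap.apply ℝ F ((0:ℝ),(1:ℝ))).contDiff.comp h

lemma PDX_PDY_comm (f : ℝ×ℝ → F) (hf : ContDiff ℝ (⊤ : ℕ∞) f) (p : ℝ×ℝ) :
    PDX (PDY f) p = PDY (PDX f) p := by
  have hs : IsSymmSndFDerivAt ℝ f p := hf.contDiffAt.isSymmSndFDerivAt (by rw [minSmoothness_of_isRCLikeNormedField]; exact WithTop.coe_le_coe.mpr le_top)
  have hdf : ContDiff ℝ (⊤ : ℕ∞) (fderiv ℝ f) := hf.fderiv_right (m := (⊤ : ℕ∞)) (by simp)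
  have h1 : HasFDerivAt (PDY f)
      ((ContinuousLinearMap.apply ℝ F ((0:ℝ),(1:ℝ))).comp (fderiv ℝ (fderiv ℝ f) p)) p :=
    (ContinuousLinearMap.apply ℝ F ((0:ℝ),(1:ℝ))).hasFDerivAt.comp p
      (hdf.differentiable (by simp) p).hasFDerivAt
  have h2 : HasFDerivAt (PDX f)
      ((ContinuousLinearMap.apply ℝ F ((1:ℝ),(0:ℝ))).comp (fderiv ℝ (fderiv ℝ f) p)) p :=
    (ContinuousLinearMap.apply ℝ F ((1:ℝ),(0:ℝ))).hasFDerivAt.comp p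
      (hdf.differentiable (by simp) p).hasFDerivAt
  have e1 : PDX (PDY f) p = fderiv ℝ (fderiv ℝ f) p (1,0) (0,1) := by
    simp [PDX, h1.fderiv]
  have e2 : PDY (PDX f) p = fderiv ℝ (fderiv ℝ f) p (0,1) (1,0) := by
    simp [PDY, h2.fderiv]
  rw [e1, e2, hs]

end NVAux

/-- If `v` solves the Tzitzéica equation, then `u₃ = −(5/3)((∂_z v)² + ∂_z² v)`
satisfies the first Novikov–Veselov constraint `(u₃)_z̄ = 5 V_z` with `V = e^v`. -/
theorem nv_coefficient_u3
    (v : ℝ → ℝ → ℝ) (hv : ContDiff ℝ (⊤ : ℕ∞) (Function.uncurry v))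
    (htz : ∀ x y, deriv (fun x' => deriv (fun x'' => v x'' y) x') x
      + deriv (fun y' => deriv (fun y'' => v x y'') y') y
      = 4 * (Real.exp (-2 * v x y) - Real.exp (v x y)))
    (vC V u3 : ℝ → ℝ → ℂ)
    (hvC : ∀ x y, vC x y = (v x y : ℂ))
    (hV : ∀ x y, V x y = (Real.exp (v x y) : ℂ))
    (hu3 : ∀ x y, u3 x y = -(5/3) * ((dz vC x y)^2 + dz (dz vC) x y)) :
    ∀ x y, dzb u3 x y = 5 * dz V x y := by
  set g : ℝ×ℝ → ℝ := Function.uncurry v with hg_def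
  have hg : ContDiff ℝ (⊤ : ℕ∞) g := hv
  set a : ℝ×ℝ → ℝ := PDX g with ha_def
  set b : ℝ×ℝ → ℝ := PDY g with hb_def
  have ha : ContDiff ℝ (⊤ : ℕ∞) a := contDiff_PDX g hg
  have hb : ContDiff ℝ (⊤ : ℕ∞) b := contDiff_PDY g hg
  set c : ℝ×ℝ → ℝ := PDX a with hc_def
  set d : ℝ×ℝ → ℝ := PDY a with hd_def
  set e : ℝ×ℝ → ℝ := PDY b with he_def
  have hc : ContDiff ℝ (⊤ : ℕ∞) c := contDiff_PDX a ha
  have hd : ContDiff ℝ (⊤ : ℕ∞) d := contDiff_PDY a ha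
  have he : ContDiff ℝ (⊤ : ℕ∞) e := contDiff_PDY b hb
  have hPXb : PDX b = d := funext fun p => PDX_PDY_comm g hg p
  set r : ℝ×ℝ → ℝ := PDX c with hr_def
  set s : ℝ×ℝ → ℝ := PDX d with hs_def
  set t : ℝ×ℝ → ℝ := PDY d with ht_def
  set u : ℝ×ℝ → ℝ := PDY e with hu_def
  have hPYc : PDY c = s := funext fun p => (PDX_PDY_comm a ha p).symm
  have hPXe : PDX e = t := by
    have h1 : PDX (PDY b) = PDY (PDX b) := funext fun p => PDX_PDY_comm b hb p
    rw [he_def, h1, hPXb, hd_def, ht_def]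
  -- Tzitzéica in terms of the partials
  have hce : ∀ x y : ℝ, c (x,y) + e (x,y)
      = 4 * (Real.exp (-2 * v x y) - Real.exp (v x y)) := by
    intro x y
    have h1 := htz x y
    have e1 : deriv (fun x' => deriv (fun x'' => v x'' y) x') x = c (x,y) := by
      have hf : (fun x' => deriv (fun x'' => v x'' y) x') = fun x' => a (x',y) :=
        funext fun x' => (hasDerivAt_PDX g hg x' y).deriv
      rw [hf]; exact (hasDerivAt_PDX a ha x y).deriv
    have e2 : deriv (fun y' => deriv (fun y'' => v x y'') y') y = e (x,y) := by
      have hf : (fun y' => deriv (fun y'' => v x y'') y') = fun y' => b (x,y') :=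
        funext fun y' => (hasDerivAt_PDY g hg x y').deriv
      rw [hf]; exact (hasDerivAt_PDY b hb x y).deriv
    rw [e1, e2] at h1; exact h1
  -- x-derivative of the Tzitzéica relation
  have hxrel : ∀ x y : ℝ, r (x,y) + t (x,y)
      = 4 * (Real.exp (-2 * v x y) * (-2 * a (x,y)) - Real.exp (v x y) * a (x,y)) := by
    intro x y
    have hfun : (fun x' => c (x',y) + e (x',y))
        = (fun x' => 4 * (Real.exp (-2 * v x' y) - Real.exp (v x' y))) :=
      funext fun x' => hce x' y
    have h2 : HasDerivAt (fun x' => e (x',y)) (t (x,y)) x :=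
      hPXe ▸ hasDerivAt_PDX e he x y
    have hL : HasDerivAt (fun x' => c (x',y) + e (x',y)) (r (x,y) + t (x,y)) x :=
      (hasDerivAt_PDX c hc x y).add h2
    have h0 : HasDerivAt (fun x' => v x' y) (a (x,y)) x := hasDerivAt_PDX g hg x y
    have hR : HasDerivAt (fun x' => 4 * (Real.exp (-2 * v x' y) - Real.exp (v x' y)))
        (4 * (Real.exp (-2 * v x y) * (-2 * a (x,y)) - Real.exp (v x y) * a (x,y))) x :=
      (((h0.const_mul (-2)).exp).sub h0.exp).const_mul 4
    rw [hfun] at hL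
    exact hL.unique hR
  -- y-derivative of the Tzitzéica relation
  have hyrel : ∀ x y : ℝ, s (x,y) + u (x,y)
      = 4 * (Real.exp (-2 * v x y) * (-2 * b (x,y)) - Real.exp (v x y) * b (x,y)) := by
    intro x y
    have hfun : (fun y' => c (x,y') + e (x,y'))
        = (fun y' => 4 * (Real.exp (-2 * v x y') - Real.exp (v x y'))) :=
      funext fun y' => hce x y'
    have h2 : HasDerivAt (fun y' => c (x,y')) (s (x,y)) y :=
      hPYc ▸ hasDerivAt_PDY c hc x y
    have hL : HasDerivAt (fun y' => c (x,y') + e (x,y')) (s (x,y) + u (x,y)) y :=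
      h2.add (hasDerivAt_PDY e he x y)
    have h0 : HasDerivAt (fun y' => v x y') (b (x,y)) y := hasDerivAt_PDY g hg x y
    have hR : HasDerivAt (fun y' => 4 * (Real.exp (-2 * v x y') - Real.exp (v x y')))
        (4 * (Real.exp (-2 * v x y) * (-2 * b (x,y)) - Real.exp (v x y) * b (x,y))) y :=
      (((h0.const_mul (-2)).exp).sub h0.exp).const_mul 4
    rw [hfun] at hL
    exact hL.unique hR
  -- first Wirtinger derivative of vC
  have hdzv : ∀ x y : ℝ, dz vC x y
      = (1/2) * ((a (x,y) : ℂ) - Complex.I * (b (x,y) : ℂ)) := by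
    intro x y
    have e1 : pdx vC x y = (a (x,y) : ℂ) := by
      have hf : (fun x' => vC x' y) = fun x' => ((v x' y : ℝ) : ℂ) :=
        funext fun x' => hvC x' y
      rw [pdx, hf]
      exact ((hasDerivAt_PDX g hg x y).ofReal_comp).deriv
    have e2 : pdy vC x y = (b (x,y) : ℂ) := by
      have hf : (fun y' => vC x y') = fun y' => ((v x y' : ℝ) : ℂ) :=
        funext fun y' => hvC x y'
      rw [pdy, hf]
      exact ((hasDerivAt_PDY g hg x y).ofReal_comp).deriv
    rw [dz, e1, e2]
  -- second Wirtinger derivative of vC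
  have hdz2 : ∀ x y : ℝ, dz (dz vC) x y
      = (1/2) * ((1/2) * ((c (x,y) : ℂ) - Complex.I * (d (x,y) : ℂ))
        - Complex.I * ((1/2) * ((d (x,y) : ℂ) - Complex.I * (e (x,y) : ℂ)))) := by
    intro x y
    have hBx : HasDerivAt (fun x' => b (x',y)) (d (x,y)) x :=
      hPXb ▸ hasDerivAt_PDX b hb x y
    have e1 : pdx (dz vC) x y = (1/2) * ((c (x,y) : ℂ) - Complex.I * (d (x,y) : ℂ)) := by
      have hf : (fun x' => dz vC x' y)
          = fun x' => (1/2) * ((a (x',y) : ℂ) - Complex.I * (b (x',y) : ℂ)) :=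
        funext fun x' => hdzv x' y
      rw [pdx, hf]
      exact ((((hasDerivAt_PDX a ha x y).ofReal_comp).sub
        ((hBx.ofReal_comp).const_mul Complex.I)).const_mul (1/2)).deriv
    have e2 : pdy (dz vC) x y = (1/2) * ((d (x,y) : ℂ) - Complex.I * (e (x,y) : ℂ)) := by
      have hf : (fun y' => dz vC x y')
          = fun y' => (1/2) * ((a (x,y') : ℂ) - Complex.I * (b (x,y') : ℂ)) :=
        funext fun y' => hdzv x y'
      rw [pdy, hf]
      exact ((((hasDerivAt_PDY a ha x y).ofReal_comp).sub
        (((hasDerivAt_PDY b hb x y).ofReal_comp).const_mul Complex.I)).const_mul (1/2)).deriv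
    rw [dz, e1, e2]
  -- explicit form of u3
  have hu3e : ∀ x y : ℝ, u3 x y = -(5/3) *
      (((1/2) * ((a (x,y) : ℂ) - Complex.I * (b (x,y) : ℂ)))
        * ((1/2) * ((a (x,y) : ℂ) - Complex.I * (b (x,y) : ℂ)))
      + (1/2) * ((1/2) * ((c (x,y) : ℂ) - Complex.I * (d (x,y) : ℂ))
        - Complex.I * ((1/2) * ((d (x,y) : ℂ) - Complex.I * (e (x,y) : ℂ))))) := by
    intro x y
    rw [hu3 x y, hdzv x y, hdz2 x y, pow_two]
  intro x y
  -- pdx of u3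
  have hAx : HasDerivAt (fun x' => ((a (x',y) : ℝ) : ℂ)) ((c (x,y) : ℂ)) x :=
    (hasDerivAt_PDX a ha x y).ofReal_comp
  have hBx : HasDerivAt (fun x' => ((b (x',y) : ℝ) : ℂ)) ((d (x,y) : ℂ)) x :=
    (hPXb ▸ hasDerivAt_PDX b hb x y).ofReal_comp
  have hCx : HasDerivAt (fun x' => ((c (x',y) : ℝ) : ℂ)) ((r (x,y) : ℂ)) x :=
    (hasDerivAt_PDX c hc x y).ofReal_comp
  have hDx : HasDerivAt (fun x' => ((d (x',y) : ℝ) : ℂ)) ((s (x,y) : ℂ)) x :=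
    (hasDerivAt_PDX d hd x y).ofReal_comp
  have hEx : HasDerivAt (fun x' => ((e (x',y) : ℝ) : ℂ)) ((t (x,y) : ℂ)) x :=
    (hPXe ▸ hasDerivAt_PDX e he x y).ofReal_comp
  have hAy : HasDerivAt (fun y' => ((a (x,y') : ℝ) : ℂ)) ((d (x,y) : ℂ)) y :=
    (hasDerivAt_PDY a ha x y).ofReal_comp
  have hBy : HasDerivAt (fun y' => ((b (x,y') : ℝ) : ℂ)) ((e (x,y) : ℂ)) y :=
    (hasDerivAt_PDY b hb x y).ofReal_comp
  have hCy : HasDerivAt (fun y' => ((c (x,y') : ℝ) : ℂ)) ((s (x,y) : ℂ)) y :=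
    (hPYc ▸ hasDerivAt_PDY c hc x y).ofReal_comp
  have hDy : HasDerivAt (fun y' => ((d (x,y') : ℝ) : ℂ)) ((t (x,y) : ℂ)) y :=
    (hasDerivAt_PDY d hd x y).ofReal_comp
  have hEy : HasDerivAt (fun y' => ((e (x,y') : ℝ) : ℂ)) ((u (x,y) : ℂ)) y :=
    (hasDerivAt_PDY e he x y).ofReal_comp
  have hWx := (hAx.sub (hBx.const_mul Complex.I)).const_mul ((1:ℂ)/2)
  have hWy := (hAy.sub (hBy.const_mul Complex.I)).const_mul ((1:ℂ)/2)
  have hZ1x := (hCx.sub (hDx.const_mul Complex.I)).const_mul ((1:ℂ)/2)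
  have hZ2x := (hDx.sub (hEx.const_mul Complex.I)).const_mul ((1:ℂ)/2)
  have hZx := (hZ1x.sub (hZ2x.const_mul Complex.I)).const_mul ((1:ℂ)/2)
  have hZ1y := (hCy.sub (hDy.const_mul Complex.I)).const_mul ((1:ℂ)/2)
  have hZ2y := (hDy.sub (hEy.const_mul Complex.I)).const_mul ((1:ℂ)/2)
  have hZy := (hZ1y.sub (hZ2y.const_mul Complex.I)).const_mul ((1:ℂ)/2)
  have hfx : (fun x' => u3 x' y) = fun x' => -(5/3 : ℂ) *
      (((1/2) * ((a (x',y) : ℂ) - Complex.I * (b (x',y) : ℂ)))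
        * ((1/2) * ((a (x',y) : ℂ) - Complex.I * (b (x',y) : ℂ)))
      + (1/2) * ((1/2) * ((c (x',y) : ℂ) - Complex.I * (d (x',y) : ℂ))
        - Complex.I * ((1/2) * ((d (x',y) : ℂ) - Complex.I * (e (x',y) : ℂ))))) :=
    funext fun x' => hu3e x' y
  have hfy : (fun y' => u3 x y') = fun y' => -(5/3 : ℂ) *
      (((1/2) * ((a (x,y') : ℂ) - Complex.I * (b (x,y') : ℂ)))
        * ((1/2) * ((a (x,y') : ℂ) - Complex.I * (b (x,y') : ℂ)))
      + (1/2) * ((1/2) * ((c (x,y') : ℂ) - Complex.I * (d (x,y') : ℂ))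
        - Complex.I * ((1/2) * ((d (x,y') : ℂ) - Complex.I * (e (x,y') : ℂ))))) :=
    funext fun y' => hu3e x y'
  have epdx : pdx u3 x y = -(5/3 : ℂ) *
      (((1/2) * ((c (x,y) : ℂ) - Complex.I * (d (x,y) : ℂ)))
          * ((1/2) * ((a (x,y) : ℂ) - Complex.I * (b (x,y) : ℂ)))
        + ((1/2) * ((a (x,y) : ℂ) - Complex.I * (b (x,y) : ℂ)))
          * ((1/2) * ((c (x,y) : ℂ) - Complex.I * (d (x,y) : ℂ)))
      + (1/2) * ((1/2) * ((r (x,y) : ℂ) - Complex.I * (s (x,y) : ℂ))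
        - Complex.I * ((1/2) * ((s (x,y) : ℂ) - Complex.I * (t (x,y) : ℂ))))) := by
    rw [pdx, hfx]
    exact (((hWx.mul hWx).add hZx).const_mul (-(5/3 : ℂ))).deriv
  have epdy : pdy u3 x y = -(5/3 : ℂ) *
      (((1/2) * ((d (x,y) : ℂ) - Complex.I * (e (x,y) : ℂ)))
          * ((1/2) * ((a (x,y) : ℂ) - Complex.I * (b (x,y) : ℂ)))
        + ((1/2) * ((a (x,y) : ℂ) - Complex.I * (b (x,y) : ℂ)))
          * ((1/2) * ((d (x,y) : ℂ) - Complex.I * (e (x,y) : ℂ)))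
      + (1/2) * ((1/2) * ((s (x,y) : ℂ) - Complex.I * (t (x,y) : ℂ))
        - Complex.I * ((1/2) * ((t (x,y) : ℂ) - Complex.I * (u (x,y) : ℂ))))) := by
    rw [pdy, hfy]
    exact (((hWy.mul hWy).add hZy).const_mul (-(5/3 : ℂ))).deriv
  have edzV : dz V x y = (1/2) * (((Real.exp (v x y) * a (x,y) : ℝ) : ℂ)
      - Complex.I * ((Real.exp (v x y) * b (x,y) : ℝ) : ℂ)) := by
    have e1 : pdx V x y = ((Real.exp (v x y) * a (x,y) : ℝ) : ℂ) := by
      have hf : (fun x' => V x' y) = fun x' => ((Real.exp (v x' y) : ℝ) : ℂ) :=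
        funext fun x' => hV x' y
      rw [pdx, hf]
      exact (((hasDerivAt_PDX g hg x y).exp).ofReal_comp).deriv
    have e2 : pdy V x y = ((Real.exp (v x y) * b (x,y) : ℝ) : ℂ) := by
      have hf : (fun y' => V x y') = fun y' => ((Real.exp (v x y') : ℝ) : ℂ) :=
        funext fun y' => hV x y'
      rw [pdy, hf]
      exact (((hasDerivAt_PDY g hg x y).exp).ofReal_comp).deriv
    rw [dz, e1, e2]
  -- assemble
  have h1c := congrArg (Complex.ofReal) (hce x y)
  have h2c := congrArg (Complex.ofReal) (hxrel x y)
  have h3c := congrArg (Complex.ofReal) (hyrel x y)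
  push_cast at h1c h2c h3c
  rw [dzb, epdx, epdy, edzV]
  push_cast
  linear_combination (-(5/12 : ℂ) * ((a (x,y) : ℂ) - Complex.I * (b (x,y) : ℂ))) * h1c
    + (-(5/24 : ℂ)) * h2c + ((5/24 : ℂ) * Complex.I) * h3c
    + ((5/12 : ℂ) * (a (x,y) : ℂ) * (e (x,y) : ℂ)
      - (5/12 : ℂ) * (b (x,y) : ℂ) * (e (x,y) : ℂ) * Complex.I
      + (5/24 : ℂ) * (t (x,y) : ℂ) - (5/24 : ℂ) * (u (x,y) : ℂ) * Complex.I) * Complex.I_sq
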